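/- Let (G,α) be a weighted graph with expansion (H,β), and let E' be a multiset of edges on the vertices of H such that for each pair of vertices a,b of H, a and b lie in the same connected component of the graph (V(H),E') if and only if aRb. Then X_{(G,α)} = Σ_{S ⊆ E'} (−1)^{|S|} X_{(H+S,β)}, where H+S denotes the graph obtained from H by adding the edge multiset S. -/

import Mathlib

open scoped BigOperators
open scoped Classical

namespace CSF

/-! ## Extended chromatic symmetric functions of multigraphs

A (multi)graph on a vertex type `V` is given by a multiset of edges `E : Multiset (Sym2 V)`
(loops and multiple edges allowed).  Colours are positive integers `ℕ+`, and the
(extended) chromatic symmetric function lives in `MvPowerSeries ℕ+ ℚ`, the power series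
in the commuting variables `x_j`, `j : ℕ+`. -/

/-- A proper colouring of the multigraph with edge multiset `E`. -/
def Proper {V C : Type*} (E : Multiset (Sym2 V)) (κ : V → C) : Prop :=
  ∀ u v : V, s(u, v) ∈ E → κ u ≠ κ v

/-- The monomial `∏_v x_{κ(v)}^{w(v)}`, recorded as its exponent vector. -/
noncomputable def mon {V : Type*} [Fintype V] (w : V → ℕ) (κ : V → ℕ+) : ℕ+ →₀ ℕ :=
  ∑ v, Finsupp.single (κ v) (w v)

/-- The extended chromatic symmetric function `X_{(G,w)}` of the weighted graph with
edge multiset `E` and vertex weights `w`: the coefficient of a monomial `m` is the number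
of proper colourings `κ` with `∏_v x_{κ(v)}^{w(v)} = x^m`. -/
noncomputable def X {V : Type*} [Fintype V] (E : Multiset (Sym2 V)) (w : V → ℕ) :
    MvPowerSeries ℕ+ ℚ :=
  fun m => (Nat.card {κ : V → ℕ+ // Proper E κ ∧ mon w κ = m} : ℚ)

/-- The chromatic polynomial `χ_G(k)`: the number of proper colourings with `k` colours. -/
noncomputable def chrom {V : Type*} [Fintype V] (E : Multiset (Sym2 V)) (k : ℕ) : ℕ :=
  Nat.card {κ : V → Fin k // Proper E κ}

/-- Edge multiset of the labelled path `P_n` on `Fin n`: edges `v_i v_{i+1}`. -/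
def pathE (n : ℕ) : Multiset (Sym2 (Fin n)) :=
  ((Finset.univ : Finset (Fin n × Fin n)).filter
    (fun p => (p.1 : ℕ) + 1 = (p.2 : ℕ))).val.map (fun p => s(p.1, p.2))

/-- Edge multiset of the labelled star `S_n` on `Fin n`: edges `v_i v_n`, `i ∈ [n-1]`. -/
def starE (n : ℕ) : Multiset (Sym2 (Fin n)) :=
  ((Finset.univ : Finset (Fin n × Fin n)).filter
    (fun p => (p.1 : ℕ) + 1 < n ∧ (p.2 : ℕ) + 1 = n)).val.map (fun p => s(p.1, p.2))

/-- Edge multiset of a disjoint union of graphs on `Fin (m i)`, `i : Fin k`. -/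
noncomputable def unionE {k : ℕ} {m : Fin k → ℕ}
    (Es : ∀ i, Multiset (Sym2 (Fin (m i)))) : Multiset (Sym2 (Σ i, Fin (m i))) :=
  ∑ i, (Es i).map (Sym2.map (fun v => ⟨i, v⟩))

/-- Extended chromatic symmetric function of a disjoint union of weighted graphs. -/
noncomputable def Xunion {k : ℕ} {m : Fin k → ℕ}
    (Es : ∀ i, Multiset (Sym2 (Fin (m i)))) (ws : ∀ i, Fin (m i) → ℕ) :
    MvPowerSeries ℕ+ ℚ :=
  X (unionE Es) (fun v => ws v.1 v.2)

/-- `X_{P_l}`: chromatic symmetric function of the disjoint union of unweighted paths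
`P_{l_1} ∪ ⋯ ∪ P_{l_k}`. -/
noncomputable def XPaths (l : List ℕ) : MvPowerSeries ℕ+ ℚ :=
  Xunion (m := fun i : Fin l.length => l.get i) (fun i => pathE (l.get i)) (fun _ _ => 1)

/-- `X_{S_l}`: chromatic symmetric function of a disjoint union of unweighted stars. -/
noncomputable def XStars (l : List ℕ) : MvPowerSeries ℕ+ ℚ :=
  Xunion (m := fun i : Fin l.length => l.get i) (fun i => starE (l.get i)) (fun _ _ => 1)

/-- `X_{(P_{ℓ(α)}, α)}`: the extended chromatic symmetric function of the path on
`ℓ(α)` vertices whose `i`-th vertex has weight `α_i`. -/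
noncomputable def Xwpath (α : List ℕ) : MvPowerSeries ℕ+ ℚ :=
  X (pathE α.length) (fun i => α.get i)

/-! ## Symmetric functions -/

/-- The power sum symmetric function `p_i = ∑_j x_j^i`. -/
noncomputable def pS (i : ℕ) : MvPowerSeries ℕ+ ℚ :=
  fun m => if ∃ j : ℕ+, m = Finsupp.single j i then 1 else 0

/-- The complete homogeneous symmetric function `h_i`. -/
noncomputable def hS (i : ℕ) : MvPowerSeries ℕ+ ℚ :=
  fun m => if (m.sum fun _ k => k) = i then 1 else 0

/-- The elementary symmetric function `e_i`. -/
noncomputable def eS (i : ℕ) : MvPowerSeries ℕ+ ℚ :=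
  fun m => if ((m.sum fun _ k => k) = i ∧ ∀ j, m j ≤ 1) then 1 else 0

/-- `p_λ = p_{λ_1} ⋯ p_{λ_k}`. -/
noncomputable def pProd (l : List ℕ) : MvPowerSeries ℕ+ ℚ := (l.map pS).prod
/-- `h_λ = h_{λ_1} ⋯ h_{λ_k}`. -/
noncomputable def hProd (l : List ℕ) : MvPowerSeries ℕ+ ℚ := (l.map hS).prod
/-- `e_λ = e_{λ_1} ⋯ e_{λ_k}`. -/
noncomputable def eProd (l : List ℕ) : MvPowerSeries ℕ+ ℚ := (l.map eS).prod

/-- The algebra `Sym` of symmetric functions, realized as the subalgebra of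
`MvPowerSeries ℕ+ ℚ` generated by the elementary symmetric functions. -/
noncomputable def SymAlg : Subalgebra ℚ (MvPowerSeries ℕ+ ℚ) :=
  Algebra.adjoin ℚ {f | ∃ i : ℕ, f = eS (i + 1)}

/-- Sort a list into weakly decreasing order (the underlying partition `α̃`). -/
def sortDesc (l : List ℕ) : List ℕ := List.insertionSort (· ≥ ·) l

/-- Partitions: weakly decreasing lists of positive integers. -/
abbrev PartL : Type := {l : List ℕ // l.Pairwise (· ≥ ·) ∧ ∀ x ∈ l, 0 < x}

/-! ## Compositions -/

/-- All coarsenings of a composition: lists obtained by summing adjacent blocks. -/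
def coarsenings : List ℕ → List (List ℕ)
  | [] => [[]]
  | a :: l =>
    (coarsenings l).map (fun β => a :: β) ++
      (coarsenings l).filterMap (fun β =>
        match β with
        | [] => none
        | b :: β' => some ((a + b) :: β'))

/-- The ribbon Schur function `r_α = ∑_{β ≽ α} (-1)^{ℓ(α) - ℓ(β)} h_{β̃}`. -/
noncomputable def ribbon (α : List ℕ) : MvPowerSeries ℕ+ ℚ :=
  ((coarsenings α).map fun β =>
    ((-1 : ℚ) ^ (α.length - β.length)) • hProd (sortDesc β)).sum

lemma sum_take_get_le (α : List ℕ) (b : Fin α.length) :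
    (α.take b).sum + α.get b ≤ α.sum := by
  have h1 : (α.take (b + 1)).sum = (α.take b).sum + α[b] := List.sum_take_succ α b b.isLt
  have h2 : (α.take (b + 1)).sum ≤ α.sum := by
    conv_rhs => rw [← List.take_append_drop (b + 1) α]
    rw [List.sum_append]
    exact Nat.le_add_right _ _
  simpa [List.get_eq_getElem, ← h1] using h2

/-- Shift a graph on `Fin m` by an offset `o` inside `Fin n`. -/
def shiftE {m n : ℕ} (o : ℕ) (h : o + m ≤ n) (E : Multiset (Sym2 (Fin m))) :
    Multiset (Sym2 (Fin n)) :=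
  E.map (Sym2.map (fun v : Fin m => (⟨o + (v : ℕ), by have := v.isLt; omega⟩ : Fin n)))

/-- The labelled graph `G_{α_1} | G_{α_2} | ⋯ | G_{α_k}` on `Fin (α₁ + ⋯ + α_k)`:
consecutive blocks of vertices carry the graphs `Gr (α_i)`. -/
noncomputable def concatE (α : List ℕ) (Gr : (k : ℕ) → Multiset (Sym2 (Fin k))) :
    Multiset (Sym2 (Fin α.sum)) :=
  ∑ b : Fin α.length,
    shiftE ((α.take b).sum) (sum_take_get_le α b) (Gr (α.get b))

/-- `set(α) = {α_1, α_1+α_2, …, α_1+⋯+α_{ℓ(α)-1}} ⊆ [n-1]`. -/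
def setC (α : List ℕ) : Finset ℕ :=
  ((List.range (α.length - 1)).map (fun j => (α.take (j + 1)).sum)).toFinset

/-- The labelled graph on `Fin n` whose edges are `v_i v_{i+1}` for `i ∈ S` (1-based). -/
def edgesFromSet (n : ℕ) (S : Finset ℕ) : Multiset (Sym2 (Fin n)) :=
  ((Finset.univ : Finset (Fin n × Fin n)).filter
    (fun p => (p.1 : ℕ) + 1 = (p.2 : ℕ) ∧ (p.2 : ℕ) ∈ S)).val.map (fun p => s(p.1, p.2))

/-- `γ = α^c`, the complement composition: the composition of `|α|` with
`set(γ) = [n-1] − set(α)`. -/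
def IsComplementOf (γ α : List ℕ) : Prop :=
  (∀ x ∈ γ, 0 < x) ∧ γ.sum = α.sum ∧ setC γ = Finset.Ioo 0 α.sum \ setC α

/-- Near concatenation `α ⊙ β` of compositions. -/
def nconcat : List ℕ → List ℕ → List ℕ
  | [], β => β
  | [a], [] => [a]
  | [a], b :: β => (a + b) :: β
  | a :: l, β => a :: nconcat l β

/-- `β^{⊙ i}`, the `i`-fold near concatenation of `β` with itself. -/
def npowOdot (β : List ℕ) : ℕ → List ℕ
  | 0 => []
  | i + 1 => nconcat (npowOdot β i) β

/-- Composition of compositions: `α ∘ β = β^{⊙α_1} · ⋯ · β^{⊙α_{ℓ(α)}}`. -/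
def compOp (α β : List ℕ) : List ℕ := (α.map (npowOdot β)).flatten

/-- The equivalence `α ∼ β`: `α` and `β` have `∘`-factorizations whose factors agree
up to reversal.  (`[1]` is a two-sided identity for `∘`, so the empty fold is harmless.) -/
def simRel (α β : List ℕ) : Prop :=
  ∃ L M : List (List ℕ),
    List.Forall₂ (fun γ δ => (γ ≠ [] ∧ ∀ x ∈ γ, 0 < x) ∧ (δ = γ ∨ δ = γ.reverse)) L M ∧
    α = L.foldr compOp [1] ∧ β = M.foldr compOp [1]

/-- A trivial factorization `α = β ∘ γ`. -/
def TrivialFac (β γ : List ℕ) : Prop :=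
  β = [1] ∨ γ = [1] ∨ (β.length = 1 ∧ γ.length = 1) ∨
    ((∀ x ∈ β, x = 1) ∧ ∀ x ∈ γ, x = 1)

/-- `L` is an irreducible factorization of `α`. -/
def IsIrreducibleFac (α : List ℕ) (L : List (List ℕ)) : Prop :=
  (∀ γ ∈ L, γ ≠ [] ∧ ∀ x ∈ γ, 0 < x) ∧
  α = L.foldr compOp [1] ∧
  (∀ i : ℕ, ∀ h : i + 1 < L.length,
    ¬ TrivialFac (L.get ⟨i, by omega⟩) (L.get ⟨i + 1, h⟩)) ∧
  (∀ γ ∈ L, ∀ δ ε : List ℕ, δ ≠ [] → (∀ x ∈ δ, 0 < x) → ε ≠ [] → (∀ x ∈ ε, 0 < x) →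
    γ = compOp δ ε → TrivialFac δ ε)

/-- All compositions of `n` (lists of positive integers with sum `n`). -/
def comps : ℕ → List (List ℕ)
  | 0 => [[]]
  | n + 1 => (List.range (n + 1)).attach.flatMap fun j =>
      (comps j.1).map (fun c => (n + 1 - j.1) :: c)
  decreasing_by exact List.mem_range.mp j.2

/-- All refinements `α ≼ λ` of a composition `λ`. -/
def refinements : List ℕ → List (List ℕ)
  | [] => [[]]
  | a :: l => (comps a).flatMap fun c => (refinements l).map (fun r => c ++ r)

/-- All compositions `α ⊆ λ`: `ℓ(α) = ℓ(λ)` and `1 ≤ α_i ≤ λ_i`. -/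
def boundedLists : List ℕ → List (List ℕ)
  | [] => [[]]
  | a :: l => (List.range a).flatMap fun j => (boundedLists l).map (fun r => (j + 1) :: r)

/-! ## Expansions of weighted graphs -/

/-- Given a decomposition `L` of `β` witnessing `β ≼ α`, vertex `a` of `H` is in the block
`R(v_v)` (0-based `v`) when `a` lies among the consecutively labelled vertices of block `v`. -/
def inBlock (L : List (List ℕ)) (v a : ℕ) : Prop :=
  ((L.take v).map List.length).sum ≤ a ∧ a < ((L.take (v + 1)).map List.length).sum

/-- The relation `a R b`: `a` and `b` lie in a common block `R(v)`. -/
def Rrel (L : List (List ℕ)) (a b : ℕ) : Prop :=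
  ∃ v : ℕ, inBlock L v a ∧ inBlock L v b

/-! ## The lattice of contractions and its Möbius function -/

/-- The restriction of the graph `E` to `B` is connected. -/
def ConnOn {V : Type*} (E : Multiset (Sym2 V)) (B : Set V) : Prop :=
  ∀ a ∈ B, ∀ b ∈ B, Relation.ReflTransGen (fun x y => x ∈ B ∧ y ∈ B ∧ s(x, y) ∈ E) a b

/-- A connected set partition of the graph `E` (as a setoid on the vertices). -/
def ConnPart {V : Type*} (E : Multiset (Sym2 V)) (σ : Setoid V) : Prop :=
  ∀ v : V, ConnOn E {u | σ.r u v}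

/-- The lattice of contractions `L_G`: connected set partitions ordered by refinement. -/
def LContr {V : Type*} (E : Multiset (Sym2 V)) : Type _ := {σ : Setoid V // ConnPart E σ}

noncomputable instance setoidFintype {V : Type*} [Fintype V] : Fintype (Setoid V) :=
  Fintype.ofInjective (fun s : Setoid V => s.r)
    (fun s t h => by cases s; cases t; simp only at h; subst h; rfl)

noncomputable instance {V : Type*} [Fintype V] (E : Multiset (Sym2 V)) : Fintype (LContr E) :=
  letI := Classical.decPred (ConnPart E)
  Subtype.fintype _

instance {V : Type*} (E : Multiset (Sym2 V)) : PartialOrder (LContr E) :=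
  Subtype.partialOrder _

noncomputable instance {V : Type*} [Fintype V] (E : Multiset (Sym2 V)) :
    LocallyFiniteOrder (LContr E) :=
  letI := Classical.decRel (α := LContr E) (· < ·)
  letI := Classical.decRel (α := LContr E) (· ≤ ·)
  Fintype.toLocallyFiniteOrder

/-- The Möbius function of the lattice of contractions. -/
noncomputable def mobLC {V : Type*} [Fintype V] (E : Multiset (Sym2 V))
    (x y : LContr E) : ℚ :=
  letI := Classical.decEq (LContr E)
  IncidenceAlgebra.mu ℚ x y

/-- `p_{type(π,w)}`: the product over the blocks of `π` of `p_{(total weight of block)}`. -/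
noncomputable def ptype {V : Type*} [Fintype V] (σ : Setoid V) (w : V → ℕ) :
    MvPowerSeries ℕ+ ℚ :=
  letI := Classical.decEq (Quotient σ)
  letI := @Quotient.fintype V _ σ (Classical.decRel _)
  ∏ c : Quotient σ, pS (∑ v : V, if Quotient.mk σ v = c then w v else 0)

/-- `0̂`, the minimal element of the lattice of contractions: each vertex is its own block. -/
def botLC {V : Type*} (E : Multiset (Sym2 V)) : LContr E :=
  ⟨⊥, by
    intro v a ha b hb
    have ha' : a = v := ha
    have hb' : b = v := hb
    subst ha'; subst hb'; exact Relation.ReflTransGen.refl⟩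

/-! ## Composition of a composition with a weighted graph -/

section comp
variable {V : Type*} [Fintype V]

/-- The gluing relation: for `i ∈ S` (1-based), identify the vertex `z` of copy `i`
with the vertex `a` of copy `i + 1` (0-based copies `i - 1` and `i`). -/
def glueRel (a z : V) (n : ℕ) (S : Finset ℕ) : (Fin n × V) → (Fin n × V) → Prop :=
  fun x y => ∃ i ∈ S, ∃ (h1 : i - 1 < n) (h2 : i < n),
    x = (⟨i - 1, h1⟩, z) ∧ y = (⟨i, h2⟩, a)

def glueSetoid (a z : V) (n : ℕ) (S : Finset ℕ) : Setoid (Fin n × V) :=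
  Relation.EqvGen.setoid (glueRel a z n S)

/-- Vertices of the graph obtained from `n` copies of a graph on `V` by contracting the
connecting edges `z_i a_{i+1}`, `i ∈ S`. -/
def compV (a z : V) (n : ℕ) (S : Finset ℕ) : Type _ := Quotient (glueSetoid a z n S)

noncomputable instance (a z : V) (n : ℕ) (S : Finset ℕ) : Fintype (compV a z n S) :=
  @Quotient.fintype _ _ (glueSetoid a z n S) (Classical.decRel _)

/-- Edges: all edges of the `n` copies of `E`, together with the connecting edges
`z_i a_{i+1}` for `i ∈ [n-1] − S` (the ones not contracted). -/
noncomputable def compE (E : Multiset (Sym2 V)) (a z : V) (n : ℕ) (S : Finset ℕ) :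
    Multiset (Sym2 (compV a z n S)) :=
  (∑ i : Fin n, E.map (Sym2.map fun v =>
      (Quotient.mk (glueSetoid a z n S) (i, v) : compV a z n S)))
  + ((Finset.Ioo 0 n \ S).attach.val.map fun i =>
      s((Quotient.mk (glueSetoid a z n S)
          (⟨i.1 - 1, by
            have := i.2; simp only [Finset.mem_sdiff, Finset.mem_Ioo] at this; omega⟩, z) :
            compV a z n S),
        (Quotient.mk (glueSetoid a z n S)
          (⟨i.1, by
            have := i.2; simp only [Finset.mem_sdiff, Finset.mem_Ioo] at this; omega⟩, a) :
            compV a z n S)))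

/-- Weights: a contracted vertex receives the sum of the weights of its constituents. -/
noncomputable def compW (w : V → ℕ) (a z : V) (n : ℕ) (S : Finset ℕ) :
    compV a z n S → ℕ :=
  fun c => ∑ x : Fin n × V,
    if (Quotient.mk (glueSetoid a z n S) x : compV a z n S) = c then w x.2 else 0

/-- `X_{α ∘ (G,w)}`: take `|α|` copies of `(G,w)`, join successive copies by edges
`z_i a_{i+1}`, and contract exactly the connecting edges with `i ∈ set(α^c)`. -/
noncomputable def Xcomp (E : Multiset (Sym2 V)) (w : V → ℕ) (a z : V) (α : List ℕ) :
    MvPowerSeries ℕ+ ℚ :=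
  X (compE E a z α.sum (Finset.Ioo 0 α.sum \ setC α))
    (compW w a z α.sum (Finset.Ioo 0 α.sum \ setC α))

end comp

end CSF

/-!
Since the `E'`-components of `H` are exactly the blocks `R(v)`, pulling colourings back along
the block map `π : V(H) → V(G)` identifies the proper colourings of `G` with the colourings of
`H` that are proper on `H` and monochromatic on every edge of `E'`, and this preserves the
monomial because the weight of `v` is the total weight of `R(v)`. For a fixed colouring `κ`,
`∑_{S ⊆ E'} (-1)^{|S|} [κ proper on S]` is `1` if `κ` is monochromatic on `E'` and `0`
otherwise; summing this over the colourings of `H` with a given monomial, which are finitely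
many because all weights are positive, gives the right-hand side.
-/

namespace Multiset

theorem sum_powerset_neg_one_pow_mul_ite {α R : Type*} [CommRing R] (p : α → Prop)
    [DecidablePred p] (T : Multiset α) :
    (T.powerset.map fun S => (-1 : R) ^ card S * if ∀ e ∈ S, p e then 1 else 0).sum =
      if ∀ e ∈ T, ¬ p e then 1 else 0 := by
  induction T using Multiset.induction with
  | empty => simp
  | cons a T ih =>
    have hcons (S : Multiset α) :
        (-1 : R) ^ card (a ::ₘ S) * (if ∀ e ∈ a ::ₘ S, p e then 1 else 0) =
          -(if p a then 1 else 0) * ((-1 : R) ^ card S * if ∀ e ∈ S, p e then 1 else 0) := by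
      by_cases ha : p a <;> simp [ha, pow_succ]
    rw [powerset_cons, map_add, sum_add, map_map, Function.comp_def]
    simp only [hcons]
    rw [sum_map_mul_left, ih]
    split_ifs <;> simp_all

end Multiset

theorem natCard_and_eq_card_filter {α : Type*} (s : Finset α) {P Q : α → Prop}
    [DecidablePred P] (hs : ∀ x, x ∈ s ↔ Q x) :
    Nat.card {x // P x ∧ Q x} = (s.filter P).card := by
  rw [← Nat.card_eq_finsetCard]
  exact Nat.card_congr (Equiv.subtypeEquivRight fun x => by rw [Finset.mem_filter, hs, and_comm])

theorem Nat.exists_le_lt_succ_of_lt {S : ℕ → ℕ} {a n : ℕ} (h0 : S 0 ≤ a) (h : a < S n) :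
    ∃ v < n, S v ≤ a ∧ a < S (v + 1) := by
  induction n with
  | zero => omega
  | succ n ih =>
    by_cases han : a < S n
    · obtain ⟨v, hv, hvS⟩ := ih han
      exact ⟨v, by omega, hvS⟩
    · exact ⟨n, by omega, by omega, h⟩

theorem Monotone.eq_of_le_lt_succ {S : ℕ → ℕ} (hS : Monotone S) {a v w : ℕ}
    (hv : S v ≤ a ∧ a < S (v + 1)) (hw : S w ≤ a ∧ a < S (w + 1)) : v = w := by
  by_contra hne
  rcases Nat.lt_or_gt_of_ne hne with h | h
  · have := hS (show v + 1 ≤ w by omega); omega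
  · have := hS (show w + 1 ≤ v by omega); omega

theorem List.sum_filter_le_lt {M : Type*} [AddCancelCommMonoid M] (l : List M) {lo hi : ℕ}
    (h : lo ≤ hi) :
    ∑ i : Fin l.length with lo ≤ i.1 ∧ i.1 < hi, l[i] = ((l.take hi).drop lo).sum := by
  have sum_take (n : ℕ) : (l.take n).sum = ∑ i : Fin l.length with i.1 < n, l[i] := by
    simpa only [Fin.getElem_fin, List.ofFn_getElem] using
      List.sum_take_ofFn (fun i : Fin l.length => l[i]) n
  have hsplit : (l.take hi).sum = (l.take lo).sum + ((l.take hi).drop lo).sum := by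
    conv_lhs => rw [← List.take_append_drop lo (l.take hi), List.take_take, min_eq_left h]
    rw [List.sum_append]
  have hfilter : ∑ i : Fin l.length with i.1 < hi, l[i] =
      ∑ i : Fin l.length with i.1 < lo, l[i] +
        ∑ i : Fin l.length with lo ≤ i.1 ∧ i.1 < hi, l[i] := by
    rw [← Finset.sum_filter_add_sum_filter_not _ (fun i : Fin l.length => (i : ℕ) < lo)]
    simp only [Finset.filter_filter]
    congr 2 <;> ext i <;> simp only [Finset.mem_filter, Finset.mem_univ, true_and] <;> omega
  rw [sum_take, sum_take, hfilter] at hsplit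
  exact add_left_cancel hsplit

namespace CSF

section Colouring

variable {V C : Type*}

def Monochromatic (E : Multiset (Sym2 V)) (κ : V → C) : Prop :=
  ∀ u v : V, s(u, v) ∈ E → κ u = κ v

theorem proper_iff_forall_not_isDiag (E : Multiset (Sym2 V)) (κ : V → C) :
    Proper E κ ↔ ∀ e ∈ E, ¬ (e.map κ).IsDiag := by
  simp [Proper, Sym2.forall]

theorem monochromatic_iff_forall_isDiag (E : Multiset (Sym2 V)) (κ : V → C) :
    Monochromatic E κ ↔ ∀ e ∈ E, (e.map κ).IsDiag := by
  simp [Monochromatic, Sym2.forall]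

theorem proper_add_iff (E F : Multiset (Sym2 V)) (κ : V → C) :
    Proper (E + F) κ ↔ Proper E κ ∧ Proper F κ := by
  simp only [proper_iff_forall_not_isDiag, Multiset.mem_add, or_imp, forall_and]

theorem sum_powerset_neg_one_pow_mul_ite_proper (T : Multiset (Sym2 V)) (κ : V → C) :
    (T.powerset.map fun S => (-1 : ℚ) ^ Multiset.card S * if Proper S κ then 1 else 0).sum =
      if Monochromatic T κ then 1 else 0 := by
  simpa only [proper_iff_forall_not_isDiag, monochromatic_iff_forall_isDiag, not_not] using
    Multiset.sum_powerset_neg_one_pow_mul_ite (R := ℚ) (fun e : Sym2 V => ¬ (e.map κ).IsDiag) T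

end Colouring

section Monomial

variable {V W : Type*} [Fintype V] [Fintype W]

theorem le_mon_apply (w : V → ℕ) (κ : V → ℕ+) (v : V) : w v ≤ mon w κ (κ v) := by
  rw [mon, Finsupp.finsetSum_apply]
  calc w v = Finsupp.single (κ v) (w v) (κ v) := Finsupp.single_eq_same.symm
    _ ≤ _ := Finset.single_le_sum (f := fun u => Finsupp.single (κ u) (w u) (κ v))
        (fun _ _ => Nat.zero_le _) (Finset.mem_univ v)

theorem finite_setOf_mon_eq {w : V → ℕ} (hw : ∀ v, 0 < w v) (m : ℕ+ →₀ ℕ) :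
    {κ : V → ℕ+ | mon w κ = m}.Finite := by
  refine (Set.Finite.pi (t := fun _ => (m.support : Set ℕ+))
    fun _ => m.support.finite_toSet).subset ?_
  rintro κ rfl v -
  exact Finsupp.mem_support_iff.2 (lt_of_lt_of_le (hw v) (le_mon_apply w κ v)).ne'

theorem mon_comp [DecidableEq V] {wG : V → ℕ} {wH : W → ℕ} {π : W → V}
    (hw : ∀ v, wG v = ∑ a with π a = v, wH a) (κ : V → ℕ+) :
    mon wH (κ ∘ π) = mon wG κ := by
  rw [mon, mon, ← Finset.sum_fiberwise _ π]
  refine Finset.sum_congr rfl fun v _ => ?_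
  rw [hw, Finsupp.single_finsetSum]
  exact Finset.sum_congr rfl fun a ha => by rw [Function.comp_apply, (Finset.mem_filter.1 ha).2]

end Monomial

theorem sum_powerset_smul_X_add_apply {W : Type*} [Fintype W] {w : W → ℕ} (hw : ∀ a, 0 < w a)
    (EH E' : Multiset (Sym2 W)) (m : ℕ+ →₀ ℕ) :
    (E'.powerset.map fun S => ((-1 : ℚ) ^ Multiset.card S) • X (EH + S) w).sum m =
      Nat.card {κ : W → ℕ+ // (Proper EH κ ∧ Monochromatic E' κ) ∧ mon w κ = m} := by
  set s := (finite_setOf_mon_eq hw m).toFinset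
  have hs (κ : W → ℕ+) : κ ∈ s ↔ mon w κ = m := Set.Finite.mem_toFinset _
  have hX (S : Multiset (Sym2 W)) : X (EH + S) w m =
      ∑ κ ∈ s, (if Proper EH κ then 1 else 0) * if Proper S κ then 1 else 0 := by
    rw [X, natCard_and_eq_card_filter s hs, Finset.natCast_card_filter (R := ℚ)]
    simp only [proper_add_iff, ite_zero_mul_ite_zero, mul_one]
  calc (E'.powerset.map fun S => ((-1 : ℚ) ^ Multiset.card S) • X (EH + S) w).sum m
      = (E'.powerset.map fun S => ∑ κ ∈ s, (if Proper EH κ then 1 else 0) *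
          ((-1 : ℚ) ^ Multiset.card S * if Proper S κ then 1 else 0)).sum := by
        rw [← MvPowerSeries.coeff_apply (Multiset.sum _), map_multiset_sum, Multiset.map_map]
        refine congrArg Multiset.sum (Multiset.map_congr rfl fun S _ => ?_)
        rw [Function.comp_apply, MvPowerSeries.coeff_smul, MvPowerSeries.coeff_apply, hX,
          Finset.mul_sum]
        exact Finset.sum_congr rfl fun κ _ => by ring
    _ = ∑ κ ∈ s, (if Proper EH κ then 1 else 0) *
          (E'.powerset.map fun S =>
            (-1 : ℚ) ^ Multiset.card S * if Proper S κ then 1 else 0).sum := by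
        simp only [Finset.sum_eq_multiset_sum, ← Multiset.sum_map_mul_left]
        exact Multiset.sum_map_sum_map _ _
    _ = Nat.card {κ : W → ℕ+ // (Proper EH κ ∧ Monochromatic E' κ) ∧ mon w κ = m} := by
        simp only [sum_powerset_neg_one_pow_mul_ite_proper, ite_zero_mul_ite_zero, mul_one,
          Finset.sum_boole, natCard_and_eq_card_filter s hs]

section Expansion

variable {V W C : Type*}

/-- The fibre `π⁻¹ v` plays the role of the block `R(v)`. -/
structure IsExpansion [Fintype W] [DecidableEq V] (EG : Multiset (Sym2 V)) (wG : V → ℕ)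
    (EH : Multiset (Sym2 W)) (wH : W → ℕ) (π : W → V) : Prop where
  surjective : Function.Surjective π
  weight_eq : ∀ v, wG v = ∑ a with π a = v, wH a
  mem_iff : ∀ u v, s(u, v) ∈ EG ↔ ∃ a b, s(a, b) ∈ EH ∧ π a = u ∧ π b = v

theorem proper_comp_iff {EG : Multiset (Sym2 V)} {EH : Multiset (Sym2 W)} {π : W → V}
    (hE : ∀ u v, s(u, v) ∈ EG ↔ ∃ a b, s(a, b) ∈ EH ∧ π a = u ∧ π b = v)
    (κ : V → C) : Proper EH (κ ∘ π) ↔ Proper EG κ := by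
  constructor
  · intro h u v huv
    obtain ⟨a, b, hab, rfl, rfl⟩ := (hE u v).1 huv
    exact h a b hab
  · exact fun h a b hab => h _ _ ((hE _ _).2 ⟨a, b, hab, rfl, rfl⟩)

theorem Monochromatic.apply_eq_of_reflTransGen {E : Multiset (Sym2 V)} {κ : V → C}
    (hκ : Monochromatic E κ) {a b : V}
    (h : Relation.ReflTransGen (fun x y => s(x, y) ∈ E) a b) : κ a = κ b := by
  induction h with
  | refl => rfl
  | tail _ hbc hab => exact hab.trans (hκ _ _ hbc)

theorem Monochromatic.exists_comp_eq {E : Multiset (Sym2 W)} {π : W → V}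
    (hπ : Function.Surjective π)
    (hE : ∀ a b, π a = π b → Relation.ReflTransGen (fun x y => s(x, y) ∈ E) a b)
    {κ : W → C} (hκ : Monochromatic E κ) : ∃ κ' : V → C, κ' ∘ π = κ :=
  ⟨κ ∘ Function.surjInv hπ, funext fun a =>
    hκ.apply_eq_of_reflTransGen (hE _ _ (Function.surjInv_eq hπ (π a)))⟩

variable [Fintype V] [Fintype W] [DecidableEq V] {EG : Multiset (Sym2 V)} {wG : V → ℕ}
  {EH E' : Multiset (Sym2 W)} {wH : W → ℕ} {π : W → V}

theorem IsExpansion.natCard_proper_eq (h : IsExpansion EG wG EH wH π)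
    (hE' : ∀ a b, Relation.ReflTransGen (fun x y => s(x, y) ∈ E') a b ↔ π a = π b)
    (m : ℕ+ →₀ ℕ) :
    Nat.card {κ : V → ℕ+ // Proper EG κ ∧ mon wG κ = m} =
      Nat.card {κ : W → ℕ+ // (Proper EH κ ∧ Monochromatic E' κ) ∧ mon wH κ = m} := by
  refine Nat.card_congr (Equiv.ofBijective (fun κ => ⟨κ.1 ∘ π,
    ⟨(proper_comp_iff h.mem_iff _).2 κ.2.1, fun a b hab => congrArg κ.1
      ((hE' a b).1 (Relation.ReflTransGen.single hab))⟩,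
    (mon_comp h.weight_eq _).trans κ.2.2⟩) ⟨fun κ₁ κ₂ h12 => ?_, fun κ => ?_⟩)
  · exact Subtype.ext (h.surjective.injective_comp_right (congrArg Subtype.val h12))
  · obtain ⟨κ, ⟨hproper, hmono⟩, hmon⟩ := κ
    obtain ⟨κ', rfl⟩ := hmono.exists_comp_eq h.surjective fun a b => (hE' a b).2
    exact ⟨⟨κ', (proper_comp_iff h.mem_iff _).1 hproper,
      (mon_comp h.weight_eq _).symm.trans hmon⟩, rfl⟩

theorem IsExpansion.X_eq_sum_powerset (h : IsExpansion EG wG EH wH π) (hwH : ∀ a, 0 < wH a)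
    (hE' : ∀ a b, Relation.ReflTransGen (fun x y => s(x, y) ∈ E') a b ↔ π a = π b) :
    X EG wG = (E'.powerset.map fun S => ((-1 : ℚ) ^ Multiset.card S) • X (EH + S) wH).sum := by
  funext m
  rw [sum_powerset_smul_X_add_apply hwH, X, h.natCard_proper_eq hE']

end Expansion

theorem monotone_sum_length_take (L : List (List ℕ)) :
    Monotone fun v => ((L.take v).map List.length).sum := by
  simpa only [List.map_take] using List.monotone_sum_take (L.map List.length)

theorem inBlock_unique {L : List (List ℕ)} {v w a : ℕ} (hv : inBlock L v a)
    (hw : inBlock L w a) : v = w :=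
  Monotone.eq_of_le_lt_succ (monotone_sum_length_take L) hv hw

theorem exists_inBlock {L : List (List ℕ)} {a : ℕ} (ha : a < L.flatten.length) :
    ∃ v < L.length, inBlock L v a :=
  Nat.exists_le_lt_succ_of_lt (S := fun v => ((L.take v).map List.length).sum) (by simp)
    (by simpa [List.length_flatten] using ha)

theorem exists_inBlock_of_ne_nil {L : List (List ℕ)} {v : ℕ} (hv : v < L.length)
    (hne : L[v] ≠ []) : ∃ a < L.flatten.length, inBlock L v a := by
  have hstep : ((L.take (v + 1)).map List.length).sum =
      ((L.take v).map List.length).sum + L[v].length := by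
    simp only [List.map_take]
    rw [List.sum_take_succ _ _ (by simpa using hv), List.getElem_map]
  have hle : ((L.take (v + 1)).map List.length).sum ≤ L.flatten.length := by
    simpa [List.length_flatten] using
      monotone_sum_length_take L (show v + 1 ≤ L.length by omega)
  have hpos := List.length_pos_iff.2 hne
  exact ⟨_, by omega, le_rfl, by omega⟩

theorem sum_getElem_flatten_inBlock (L : List (List ℕ)) {v : ℕ} (hv : v < L.length) :
    ∑ a : Fin L.flatten.length with inBlock L v a.1, L.flatten[a] = L[v].sum := by
  rw [← List.drop_take_succ_flatten_eq_getElem L v hv, ← List.sum_filter_le_lt _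
    (List.monotone_sum_take (L.map List.length) (Nat.le_succ v))]
  simp only [inBlock, List.map_take]

section ListExpansion

variable {L : List (List ℕ)} {π : Fin L.flatten.length → Fin (L.map List.sum).length}

theorem inBlock_iff_eq (hπ : ∀ a, inBlock L (π a) a) (a : Fin L.flatten.length)
    (v : Fin (L.map List.sum).length) : inBlock L v a ↔ π a = v :=
  ⟨fun h => Fin.ext (inBlock_unique (hπ a) h), fun h => h ▸ hπ a⟩

theorem rrel_iff_eq (hπ : ∀ a, inBlock L (π a) a) (a b : Fin L.flatten.length) :
    Rrel L a b ↔ π a = π b :=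
  ⟨fun ⟨_, ha, hb⟩ => Fin.ext ((inBlock_unique (hπ a) ha).trans (inBlock_unique hb (hπ b))),
    fun h => ⟨π a, hπ a, h ▸ hπ b⟩⟩

theorem isExpansion_of_inBlock (hLne : ∀ l ∈ L, l ≠ [])
    {EG : Multiset (Sym2 (Fin (L.map List.sum).length))}
    {EH : Multiset (Sym2 (Fin L.flatten.length))}
    (hexpansion : ∀ u v : Fin (L.map List.sum).length,
      s(u, v) ∈ EG ↔ ∃ a b : Fin L.flatten.length,
        s(a, b) ∈ EH ∧ inBlock L (u : ℕ) (a : ℕ) ∧ inBlock L (v : ℕ) (b : ℕ))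
    (hπ : ∀ a, inBlock L (π a) a) :
    IsExpansion EG (fun v => (L.map List.sum).get v) EH (fun a => L.flatten.get a) π where
  surjective v := by
    have hv : (v : ℕ) < L.length := by simpa using v.2
    obtain ⟨a, ha, hva⟩ := exists_inBlock_of_ne_nil hv (hLne _ (List.getElem_mem hv))
    exact ⟨⟨a, ha⟩, (inBlock_iff_eq hπ _ v).1 hva⟩
  weight_eq v := by
    have hv : (v : ℕ) < L.length := by simpa using v.2
    rw [List.get_eq_getElem, List.getElem_map, ← sum_getElem_flatten_inBlock L hv]
    refine Finset.sum_congr (Finset.filter_congr fun a _ => inBlock_iff_eq hπ a v) fun _ _ => rfl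
  mem_iff u v := by simp only [hexpansion, inBlock_iff_eq hπ]

end ListExpansion

theorem extended_chromatic_inclusion_exclusion_general
    (α β : List ℕ) (hβpos : ∀ x ∈ β, 0 < x)
    (EG : Multiset (Sym2 (Fin α.length))) (EH : Multiset (Sym2 (Fin β.length)))
    (L : List (List ℕ)) (hLjoin : L.flatten = β) (hLne : ∀ l ∈ L, l ≠ [])
    (hLsum : α = L.map List.sum)
    (hexpansion : ∀ u v : Fin α.length,
      s(u, v) ∈ EG ↔ ∃ a b : Fin β.length,
        s(a, b) ∈ EH ∧ inBlock L (u : ℕ) (a : ℕ) ∧ inBlock L (v : ℕ) (b : ℕ))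
    (E' : Multiset (Sym2 (Fin β.length)))
    (hE' : ∀ a b : Fin β.length,
      Relation.ReflTransGen (fun x y : Fin β.length => s(x, y) ∈ E') a b ↔
        Rrel L (a : ℕ) (b : ℕ)) :
    X EG (fun i => α.get i) =
      (E'.powerset.map fun S =>
        ((-1 : ℚ) ^ Multiset.card S) • X (EH + S) (fun i => β.get i)).sum := by
  subst hLjoin hLsum
  have hblock (a : Fin L.flatten.length) : ∃ v : Fin (L.map List.sum).length, inBlock L v a := by
    obtain ⟨v, hv, ha⟩ := exists_inBlock a.2
    exact ⟨⟨v, by simpa using hv⟩, ha⟩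
  choose π hπ using hblock
  exact (isExpansion_of_inBlock hLne hexpansion hπ).X_eq_sum_powerset
    (fun a => hβpos _ (List.get_mem _ _)) fun a b => (hE' a b).trans (rrel_iff_eq hπ a b)

/-- **Theorem (inclusion–exclusion for expansions).**
Let `(G,α)` be a weighted graph with expansion `(H,β)` (witnessed by the decomposition `L`
of `β` into consecutive blocks whose sums give `α`), and let `E'` be a multiset of edges on
the vertices of `H` such that two vertices of `H` lie in the same connected component of
`(V(H), E')` iff they are `R`-related.  Then
`X_{(G,α)} = ∑_{S ⊆ E'} (-1)^{|S|} X_{(H+S,β)}`. -/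
theorem extended_chromatic_inclusion_exclusion
    (α β : List ℕ) (hαpos : ∀ x ∈ α, 0 < x) (hβpos : ∀ x ∈ β, 0 < x)
    (EG : Multiset (Sym2 (Fin α.length))) (EH : Multiset (Sym2 (Fin β.length)))
    (L : List (List ℕ)) (hLjoin : L.flatten = β) (hLne : ∀ l ∈ L, l ≠ [])
    (hLsum : α = L.map List.sum)
    (hexpansion : ∀ u v : Fin α.length,
      s(u, v) ∈ EG ↔ ∃ a b : Fin β.length,
        s(a, b) ∈ EH ∧ inBlock L (u : ℕ) (a : ℕ) ∧ inBlock L (v : ℕ) (b : ℕ))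
    (E' : Multiset (Sym2 (Fin β.length)))
    (hE' : ∀ a b : Fin β.length,
      Relation.ReflTransGen (fun x y : Fin β.length => s(x, y) ∈ E') a b ↔
        Rrel L (a : ℕ) (b : ℕ)) :
    X EG (fun i => α.get i) =
      (E'.powerset.map fun S =>
        ((-1 : ℚ) ^ Multiset.card S) • X (EH + S) (fun i => β.get i)).sum :=
  extended_chromatic_inclusion_exclusion_general α β hβpos EG EH L hLjoin hLne hLsum hexpansion E'
    hE'

end CSF
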